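/- Generating function for the bicomplex Hermite polynomials (bar version): for all U, V, Z ∈ ℂ × ℂ, with Z̄ := (conj λ₂, conj λ₁) for Z = (λ₁, λ₂), the double series Σ_{m=0}^∞ Σ_{n=0}^∞ 𝐇_{m,n}(Z, Z̄) · U^m · V^n / (m! n!) converges in the Banach algebra ℂ × ℂ and equals exp(U·Z + V·Z̄ − U·V). -/

import Mathlib

/-! `exp (u z + v w - u v) = exp (u z) * exp (v w) * exp (-(u v))` is a product of three
absolutely convergent series. Substituting `(a, b, k) ↦ (a + k, b + k, k)` and summing over `k` for fixed
`m = a + k`, `n = b + k` collects exactly `(m! n!)⁻¹ 𝐇_{m,n}(z, w)` as the coefficient of `u^m v^n`. This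
works in every commutative Banach algebra, and `ℂ × ℂ` with the componentwise exponential is one. -/

open Complex

/-- The bicomplex Hermite polynomial of the first kind `𝐇_{m,n}(Z,W)`, computed in the
bicomplex algebra `ℂ × ℂ` (idempotent representation, componentwise operations). -/
noncomputable def hermiteBC (m n : ℕ) (Z W : ℂ × ℂ) : ℂ × ℂ :=
  ∑ k ∈ Finset.range (min m n + 1),
    ((-1 : ℂ) ^ k * (k.factorial : ℂ) * (m.choose k : ℂ) * (n.choose k : ℂ)) •
      (Z ^ (m - k) * W ^ (n - k))

/-- The bicomplex exponential: the componentwise complex exponential on `ℂ × ℂ`. -/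
noncomputable def bcExp (Z : ℂ × ℂ) : ℂ × ℂ := (Complex.exp Z.1, Complex.exp Z.2)

/-- The bicomplex bar-conjugate: `Z̄ = (conj λ₂, conj λ₁)` for `Z = (λ₁, λ₂)`. -/
def bcBar (Z : ℂ × ℂ) : ℂ × ℂ := (starRingEnd ℂ Z.2, starRingEnd ℂ Z.1)

open Finset Nat

noncomputable def complexHermite (𝕂 : Type*) {𝔸 : Type*} [Ring 𝕂] [Semiring 𝔸] [Module 𝕂 𝔸]
    (m n : ℕ) (z w : 𝔸) : 𝔸 :=
  ∑ k ∈ range (min m n + 1),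
    ((-1 : 𝕂) ^ k * (k ! : 𝕂) * (m.choose k : 𝕂) * (n.choose k : 𝕂)) • (z ^ (m - k) * w ^ (n - k))

theorem hasSum_shear_iff {M : Type*} [AddCommMonoid M] [TopologicalSpace M]
    {f : (ℕ × ℕ) × ℕ → M} {a : M} :
    HasSum (fun q : (ℕ × ℕ) × ℕ =>
        if q.2 ≤ q.1.1 ∧ q.2 ≤ q.1.2 then f ((q.1.1 - q.2, q.1.2 - q.2), q.2) else 0) a ↔
      HasSum f a := by
  let shear : (ℕ × ℕ) × ℕ → (ℕ × ℕ) × ℕ := fun q => ((q.1.1 + q.2, q.1.2 + q.2), q.2)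
  have shear_injective : Function.Injective shear := by
    rintro ⟨⟨a, b⟩, c⟩ ⟨⟨a', b'⟩, c'⟩ h
    simp only [shear, Prod.mk.injEq] at h
    obtain ⟨⟨ha, hb⟩, rfl⟩ := h
    rw [Nat.add_right_cancel ha, Nat.add_right_cancel hb]
  rw [← shear_injective.hasSum_iff]
  · refine iff_of_eq (congrArg (HasSum · a) (funext fun ⟨⟨a, b⟩, c⟩ => ?_))
    simp [shear]
  · rintro ⟨⟨m, n⟩, k⟩ hq
    refine if_neg fun ⟨hkm, hkn⟩ => hq ⟨((m - k, n - k), k), ?_⟩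
    simp [shear, Nat.sub_add_cancel hkm, Nat.sub_add_cancel hkn]

theorem inv_factorial_mul_factorial_mul_choose_mul_choose {K : Type*} [Field K] [CharZero K]
    (a b k : ℕ) :
    (((a + k) ! : K) * (b + k) !)⁻¹ * (k ! * (a + k).choose k * (b + k).choose k) =
      ((a ! : K) * b ! * k !)⁻¹ := by
  rw [Nat.cast_choose K (Nat.le_add_left k a), Nat.cast_choose K (Nat.le_add_left k b),
    Nat.add_sub_cancel, Nat.add_sub_cancel]
  have : ((a + k)! : K) ≠ 0 := Nat.cast_ne_zero.2 (factorial_ne_zero _)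
  have : ((b + k)! : K) ≠ 0 := Nat.cast_ne_zero.2 (factorial_ne_zero _)
  field_simp

theorem expSeries_terms_eq_smul_complexHermite_term {𝕂 𝔸 : Type*} [Field 𝕂] [CharZero 𝕂]
    [CommRing 𝔸] [Algebra 𝕂 𝔸] (u v z w : 𝔸) (a b k : ℕ) :
    ((a !⁻¹ : 𝕂) • (u * z) ^ a) * ((b !⁻¹ : 𝕂) • (v * w) ^ b) * ((k !⁻¹ : 𝕂) • (-(u * v)) ^ k) =
      (((a + k) ! : 𝕂) * (b + k) !)⁻¹ •
        (((-1 : 𝕂) ^ k * k ! * (a + k).choose k * (b + k).choose k) • (z ^ a * w ^ b) *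
          u ^ (a + k) * v ^ (b + k)) := by
  have coeff : (((a + k) ! : 𝕂) * (b + k) !)⁻¹ *
      ((-1 : 𝕂) ^ k * k ! * (a + k).choose k * (b + k).choose k) =
      (-1) ^ k * ((a ! : 𝕂) * b ! * k !)⁻¹ := by
    rw [← inv_factorial_mul_factorial_mul_choose_mul_choose]
    ring
  conv_rhs => rw [smul_mul_assoc, smul_mul_assoc, smul_smul, coeff]
  simp only [Algebra.smul_def, map_mul, map_pow, map_neg, map_one, mul_inv]
  ring

theorem hasSum_expSeries_terms_fiber {𝕂 𝔸 : Type*} [Field 𝕂] [CharZero 𝕂] [CommRing 𝔸]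
    [Algebra 𝕂 𝔸] [TopologicalSpace 𝔸] (u v z w : 𝔸) (m n : ℕ) :
    HasSum (fun k => if k ≤ m ∧ k ≤ n then
        ((m - k) !⁻¹ : 𝕂) • (u * z) ^ (m - k) * (((n - k) !⁻¹ : 𝕂) • (v * w) ^ (n - k)) *
          ((k !⁻¹ : 𝕂) • (-(u * v)) ^ k) else 0)
      (((m ! : 𝕂) * n !)⁻¹ • (complexHermite 𝕂 m n z w * u ^ m * v ^ n)) := by
  have mem_range {k : ℕ} : k ∈ range (min m n + 1) ↔ k ≤ m ∧ k ≤ n := by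
    rw [mem_range, Nat.lt_succ_iff, le_min_iff]
  convert hasSum_sum_of_ne_finset_zero (L := SummationFilter.unconditional ℕ)
    fun k hk => if_neg (mt mem_range.2 hk) using 1
  rw [complexHermite, sum_mul, sum_mul, smul_sum]
  refine sum_congr rfl fun k hk => ?_
  obtain ⟨hkm, hkn⟩ := mem_range.1 hk
  rw [if_pos ⟨hkm, hkn⟩]
  obtain ⟨a, rfl⟩ := Nat.exists_eq_add_of_le' hkm
  obtain ⟨b, rfl⟩ := Nat.exists_eq_add_of_le' hkn
  rw [Nat.add_sub_cancel, Nat.add_sub_cancel, expSeries_terms_eq_smul_complexHermite_term]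

section BanachAlgebra

open NormedSpace

variable {𝕂 𝔸 : Type*} [NontriviallyNormedField 𝕂] [CharZero 𝕂] [ContinuousSMul ℚ 𝕂]
  [NormedCommRing 𝔸] [NormedAlgebra 𝕂 𝔸] [CompleteSpace 𝔸]

variable (𝕂) in
theorem hasSum_expSeries_mul_expSeries_mul_expSeries (x y t : 𝔸) :
    HasSum (fun q : (ℕ × ℕ) × ℕ =>
        ((q.1.1 !⁻¹ : 𝕂) • x ^ q.1.1) * ((q.1.2 !⁻¹ : 𝕂) • y ^ q.1.2) *
          ((q.2 !⁻¹ : 𝕂) • t ^ q.2))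
      (NormedSpace.exp (x + y + t)) := by
  have mem_ball (a : 𝔸) : a ∈ Metric.eball 0 (expSeries 𝕂 𝔸).radius := by
    simp [expSeries_radius_eq_top]
  have exp_add_eq (a b : 𝔸) : NormedSpace.exp (a + b) = NormedSpace.exp a * NormedSpace.exp b :=
    exp_add_of_mem_ball (mem_ball a) (mem_ball b)
  have hx := exp_series_hasSum_exp' (𝕂 := 𝕂) x
  have hy := exp_series_hasSum_exp' (𝕂 := 𝕂) y
  have ht := exp_series_hasSum_exp' (𝕂 := 𝕂) t
  have nx := norm_expSeries_summable' (𝕂 := 𝕂) x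
  have ny := norm_expSeries_summable' (𝕂 := 𝕂) y
  have nt := norm_expSeries_summable' (𝕂 := 𝕂) t
  have sxy := summable_mul_of_summable_norm nx ny
  have sxyt := summable_mul_of_summable_norm (nx.mul_norm ny) nt
  have h := (hx.mul hy sxy).mul ht sxyt
  rw [exp_add_eq, exp_add_eq]
  exact h

variable (𝕂) in
theorem hasSum_complexHermite_generating (u v z w : 𝔸) :
    HasSum (fun p : ℕ × ℕ =>
        ((p.1 ! : 𝕂) * p.2 !)⁻¹ • (complexHermite 𝕂 p.1 p.2 z w * u ^ p.1 * v ^ p.2))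
      (NormedSpace.exp (u * z + v * w - u * v)) := by
  have triple := hasSum_expSeries_mul_expSeries_mul_expSeries 𝕂 (u * z) (v * w) (-(u * v))
  rw [← sub_eq_add_neg, ← hasSum_shear_iff] at triple
  exact triple.prod_fiberwise fun ⟨m, n⟩ => hasSum_expSeries_terms_fiber u v z w m n

end BanachAlgebra

theorem bcExp_eq_exp (Z : ℂ × ℂ) : bcExp Z = NormedSpace.exp Z := by
  ext <;> simp [bcExp, Complex.exp_eq_exp_ℂ]

/-- **Generating function for the bicomplex Hermite polynomials (bar version):**
`∑_{m,n} 𝐇_{m,n}(Z,Z̄) U^m V^n/(m! n!) = exp(UZ + VZ̄ - UV)`. -/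
theorem hermiteBC_generating_bar (U V Z : ℂ × ℂ) :
    HasSum
      (fun p : ℕ × ℕ =>
        ((p.1.factorial : ℂ) * (p.2.factorial : ℂ))⁻¹ •
          (hermiteBC p.1 p.2 Z (bcBar Z) * U ^ p.1 * V ^ p.2))
      (bcExp (U * Z + V * bcBar Z - U * V)) := by
  rw [bcExp_eq_exp]
  exact hasSum_complexHermite_generating ℂ U V Z (bcBar Z)
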